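/- arXiv:1411.2874 — 2 statements merged into one kernel-verified Lean document; each statement's English description precedes it below -/
import Mathlib

section
/- In every periodic solution s = (v_mid s₁ v_mid ⋯ v_mid s_p)^ω of G, either every segment s_j starts with v_top and ends with v_bot, or every segment s_j starts with v_bot and ends with v_top. -/
namespace CRUAV

/-! ### Generic single-UAV CR-UAV notions -/

/-- Duration of the subpath of an infinite path `s` between positions `a` and `b`. -/
def dur {V : Type*} (FT : V → V → ℕ) (s : ℕ → V) (a b : ℕ) : ℕ :=
  ∑ i ∈ Finset.Ico a b, FT (s i) (s (i + 1))

/-- `s` is a solution: an infinite path (consecutive vertices distinct) visiting every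
vertex infinitely often, in which any subpath joining consecutive occurrences of a
vertex `v` has duration at most `RD v`. -/
def IsSolution {V : Type*} (RD : V → ℕ) (FT : V → V → ℕ) (s : ℕ → V) : Prop :=
  (∀ n, s n ≠ s (n + 1)) ∧
  (∀ v : V, ∀ N : ℕ, ∃ n, N ≤ n ∧ s n = v) ∧
  (∀ v : V, ∀ a b : ℕ, a < b → s a = v → s b = v →
      (∀ i, a < i → i < b → s i ≠ v) → dur FT s a b ≤ RD v)

/-- The infinite periodic path obtained by repeating the finite word `u` forever. -/
def omegaPath {V : Type*} (u : List V) (d : V) : ℕ → V :=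
  fun n => u.getD (n % u.length) d

/-- Duration of a finite path given as a list of vertices. -/
def durL {V : Type*} (FT : V → V → ℕ) (L : List V) : ℕ :=
  (L.zipWith FT L.tail).sum

/-- The (inclusive) slice of a list between positions `a` and `b`. -/
def slice {V : Type*} (L : List V) (a b : ℕ) : List V := (L.take (b + 1)).drop a

/-- Duration of the subpath of the finite path `L` between positions `a` and `b`. -/
def fragDur {V : Type*} (FT : V → V → ℕ) (d : V) (L : List V) (a b : ℕ) : ℕ :=
  ∑ i ∈ Finset.Ico a b, FT (L.getD i d) (L.getD (i + 1) d)

/-! ### The constructed instance `G` -/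

/-- The constant `l = 24h + 34`. -/
def l (h : ℕ) : ℕ := 24 * h + 34

/-- The constant `T`. -/
def T (m h : ℕ) : ℕ :=
  2 * (m * (2 * (3 * m + 1) * l h + l h) + m * (2 * (3 * m + 2) * l h + l h) + l h + 2 * h)

/-- The vertices of the constructed instance `G`.  Gadgets are indexed by
`g : Fin (2*m)`: gadget `g` with `g < m` belongs to the variable `x_{g+1}^0`, and
gadget `g` with `m ≤ g` to the variable `x_{g-m+1}^1`.  `shared k` is the vertex
`v_{k+1}` shared by consecutive gadgets.  In `side g right pos`, `right = false`
selects the left side `LS` and `right = true` the right side `RS`; `pos` is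
`0` (top), `1` (middle), `2` (bottom).  `row g c pos` is the vertex of the row of
gadget `g` in column `c` (of the `4h+2` columns of the `h` clause boxes alternating
with the `h+1` separator boxes) at height `pos`.  `clauseV k` is the clause vertex of
clause `c_{k+1}`; `pvt i right` is the pivot vertex of `LCG_{i+1}`/`RCG_{i+1}` and
`port i right d` its four surrounding vertices (`d`: `0` = in↓, `1` = out↑,
`2` = in↑, `3` = out↓). -/
inductive Vtx (m h : ℕ) : Type where
  | top : Vtx m h
  | bot : Vtx m h
  | mid : Vtx m h
  | shared (k : Fin (2 * m - 1)) : Vtx m h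
  | side (g : Fin (2 * m)) (right : Bool) (pos : Fin 3) : Vtx m h
  | row (g : Fin (2 * m)) (c : Fin (4 * h + 2)) (pos : Fin 3) : Vtx m h
  | clauseV (k : Fin h) : Vtx m h
  | pvt (i : Fin m) (right : Bool) : Vtx m h
  | port (i : Fin m) (right : Bool) (d : Fin 4) : Vtx m h
  deriving DecidableEq

/-- The vertex at the top of gadget `g`. -/
def topVtx {m h : ℕ} (g : Fin (2 * m)) : Vtx m h :=
  if hg : (g : ℕ) = 0 then .top else .shared ⟨(g : ℕ) - 1, by have := g.isLt; omega⟩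

/-- The vertex at the bottom of gadget `g`. -/
def botVtx {m h : ℕ} (g : Fin (2 * m)) : Vtx m h :=
  if hg : (g : ℕ) = 2 * m - 1 then .bot else .shared ⟨(g : ℕ), by have := g.isLt; omega⟩

/-- Flight time of the two long edges at the top of gadget `g`. -/
def longTop (m h : ℕ) (g : Fin (2 * m)) : ℕ :=
  if (g : ℕ) < m then (3 * m + 1) * l h else (3 * m + 2) * l h

/-- Flight time of the two long edges at the bottom of gadget `g`
(the bottom long edges of the gadget of `x_m^0` already have flight time `(3m+2)l`). -/
def longBot (m h : ℕ) (g : Fin (2 * m)) : ℕ :=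
  if (g : ℕ) + 1 < m then (3 * m + 1) * l h else (3 * m + 2) * l h

/-- The edges of `G`, listed in one direction, with their flight times.
`occurs k g = some true` (resp. `some false`) means that the variable of gadget `g`
occurs positively (resp. negatively) in the clause `c_{k+1}`. -/
def adjFT (m h : ℕ) (occurs : Fin h → Fin (2 * m) → Option Bool) :
    Vtx m h → Vtx m h → Option ℕ
  -- long edges from the top of the first gadget
  | .top, .side g _ p => if (g : ℕ) = 0 ∧ (p : ℕ) = 0 then some (longTop m h g) else none
  -- long edges into the bottom of the last gadget
  | .bot, .side g _ p => if (g : ℕ) = 2 * m - 1 ∧ (p : ℕ) = 2 then some (longBot m h g) else none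
  -- long edges at shared vertices
  | .shared k, .side g _ p =>
      if (k : ℕ) + 1 = (g : ℕ) ∧ (p : ℕ) = 0 then some (longTop m h g)
      else if (k : ℕ) = (g : ℕ) ∧ (p : ℕ) = 2 then some (longBot m h g)
      else none
  -- vertical edges inside `LS` and `RS`
  | .side g r p, .side g' r' p' =>
      if g = g' ∧ r = r' ∧ (p : ℕ) + 1 = (p' : ℕ) then some 2 else none
  -- vertical edges inside a column of a row, and horizontal edges along the top
  -- and the bottom of a row
  | .row g c p, .row g' c' p' =>
      if g = g' ∧ c = c' ∧ (p : ℕ) + 1 = (p' : ℕ) then some 2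
      else if g = g' ∧ (c : ℕ) + 1 = (c' : ℕ) ∧ p = p' ∧ ((p : ℕ) = 0 ∨ (p : ℕ) = 2) then
        some 2
      else none
  -- the edges at `v_mid`
  | .mid, .top => some (T m h / 4)
  | .mid, .bot => some (T m h / 4)
  -- edges joining a clause vertex to the two bottom (positive occurrence) or the two
  -- top (negative occurrence) corners of the corresponding clause box
  | .clauseV k, .row g c p =>
      if ((c : ℕ) = 4 * (k : ℕ) + 2 ∨ (c : ℕ) = 4 * (k : ℕ) + 3) ∧
          ((occurs k g = some true ∧ (p : ℕ) = 2) ∨ (occurs k g = some false ∧ (p : ℕ) = 0))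
      then some 2 else none
  -- edges inside the consistency gadgets
  | .pvt i r, .port i' r' _ => if i = i' ∧ r = r' then some 2 else none
  -- edges joining the ports of the consistency gadgets to the sides `LS`/`RS`:
  -- in↓ and out↑ serve the gadget of `x_{i+1}^0`, in↑ and out↓ that of `x_{i+1}^1`;
  -- "in" ports attach to the bottom of the side, "out" ports to its top
  | .port i r dd, .side g s p =>
      if s = r ∧
          ((((dd : ℕ) = 0 ∨ (dd : ℕ) = 1) ∧ (g : ℕ) = (i : ℕ)) ∨
            (((dd : ℕ) = 2 ∨ (dd : ℕ) = 3) ∧ (g : ℕ) = (i : ℕ) + m)) ∧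
          ((((dd : ℕ) = 0 ∨ (dd : ℕ) = 2) ∧ (p : ℕ) = 2) ∨
            (((dd : ℕ) = 1 ∨ (dd : ℕ) = 3) ∧ (p : ℕ) = 0))
      then some 2 else none
  -- edges joining the ports of the consistency gadgets to the end columns of the rows
  -- (as in Figure 4 of the paper: on the left, in↓/in↑ attach to the bottom-left and
  -- out↑/out↓ to the top-left row corner; on the right, in↓/in↑ attach to the
  -- top-right and out↑/out↓ to the bottom-right row corner)
  | .port i r dd, .row g c p =>
      if ((r = false ∧ (c : ℕ) = 0) ∨ (r = true ∧ (c : ℕ) = 4 * h + 1)) ∧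
          ((((dd : ℕ) = 0 ∨ (dd : ℕ) = 1) ∧ (g : ℕ) = (i : ℕ)) ∨
            (((dd : ℕ) = 2 ∨ (dd : ℕ) = 3) ∧ (g : ℕ) = (i : ℕ) + m)) ∧
          ((r = false ∧ ((((dd : ℕ) = 0 ∨ (dd : ℕ) = 2) ∧ (p : ℕ) = 2) ∨
              (((dd : ℕ) = 1 ∨ (dd : ℕ) = 3) ∧ (p : ℕ) = 0))) ∨
            (r = true ∧ ((((dd : ℕ) = 0 ∨ (dd : ℕ) = 2) ∧ (p : ℕ) = 0) ∨
              (((dd : ℕ) = 1 ∨ (dd : ℕ) = 3) ∧ (p : ℕ) = 2))))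
      then some 2 else none
  | _, _ => none

/-- The flight times of `G`: the listed edges, symmetrised; all remaining pairs of
distinct vertices are joined by an edge of flight time `2T`. -/
def FT (m h : ℕ) (occurs : Fin h → Fin (2 * m) → Option Bool) (v w : Vtx m h) : ℕ :=
  if v = w then 0
  else
    match adjFT m h occurs v w with
    | some x => x
    | none =>
      match adjFT m h occurs w v with
      | some x => x
      | none => 2 * T m h

/-- The relative deadlines of `G`. -/
def RD (m h : ℕ) : Vtx m h → ℕ
  | .top => T m h
  | .bot => T m h
  | .mid => T m h
  | .shared _ => T m h + 2 * h
  | .side _ _ _ => T m h + l h + 2 * h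
  | .row _ _ _ => T m h + l h + 2 * h
  | .clauseV _ => 3 * T m h / 2
  | .pvt i _ => T m h / 2 + m * (2 * (3 * m + 2) * l h + l h) + 4 * h - (2 * (i : ℕ) + 1) * l h
  | .port _ _ _ => 3 * T m h / 2

/-! ### Periodic solutions split into segments -/

/-- The word `v_mid s₁ v_mid s₂ ⋯ v_mid s_p`. -/
def word {m h p : ℕ} (segs : Fin p → List (Vtx m h)) : List (Vtx m h) :=
  (List.ofFn (fun j => Vtx.mid :: segs j)).flatten

/-- The infinite periodic path `(v_mid s₁ v_mid s₂ ⋯ v_mid s_p)^ω`. -/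
def pathOf {m h p : ℕ} (segs : Fin p → List (Vtx m h)) : ℕ → Vtx m h :=
  omegaPath (word segs) .mid

/-- The special vertices `S ∪ {v_top, v_bot}`. -/
def isSpecial {m h : ℕ} : Vtx m h → Bool
  | .top => true
  | .bot => true
  | .shared _ => true
  | _ => false

/-- A fragment of the segment `L`: a maximal subpath, from position `a` to position
`b`, whose endpoints are distinct special vertices and which contains no other
special vertex. -/
def Fragment {m h : ℕ} (L : List (Vtx m h)) (a b : ℕ) : Prop :=
  a < b ∧ b < L.length ∧
    isSpecial (L.getD a Vtx.mid) = true ∧ isSpecial (L.getD b Vtx.mid) = true ∧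
    L.getD a Vtx.mid ≠ L.getD b Vtx.mid ∧
    ∀ i, a < i → i < b → isSpecial (L.getD i Vtx.mid) = false

/-! ### Clause boxes, traversal patterns, traversal directions -/

/-- The column of the first (`sec = false`) or second (`sec = true`) column of the
`(k+1)`-st clause box. -/
def boxCol {h : ℕ} (k : Fin h) (sec : Bool) : Fin (4 * h + 2) :=
  ⟨4 * (k : ℕ) + 2 + (if sec then 1 else 0), by have := k.isLt; split <;> omega⟩

/-- The vertices of the `(k+1)`-st clause box of gadget `g`. -/
def boxV {m h : ℕ} (g : Fin (2 * m)) (k : Fin h) (sec : Bool) (p : Fin 3) : Vtx m h :=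
  .row g (boxCol k sec) p

/-- Membership in the `(k+1)`-st clause box of gadget `g`. -/
def InClauseBox {m h : ℕ} (g : Fin (2 * m)) (k : Fin h) (v : Vtx m h) : Prop :=
  ∃ sec p, v = boxV g k sec p

/-- The order of the six vertices of a clause box in pattern `⊓`, entered at the
bottom corner of column `flip`. -/
def sqcapSeq {m h : ℕ} (g : Fin (2 * m)) (k : Fin h) (flip : Bool) : List (Vtx m h) :=
  [boxV g k flip 2, boxV g k flip 1, boxV g k flip 0,
   boxV g k (!flip) 0, boxV g k (!flip) 1, boxV g k (!flip) 2]

/-- The order of the six vertices of a clause box in pattern `⊔`, entered at the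
top corner of column `flip`. -/
def sqcupSeq {m h : ℕ} (g : Fin (2 * m)) (k : Fin h) (flip : Bool) : List (Vtx m h) :=
  [boxV g k flip 0, boxV g k flip 1, boxV g k flip 2,
   boxV g k (!flip) 2, boxV g k (!flip) 1, boxV g k (!flip) 0]

/-- `L` traverses the vertices of `seq` in order, consecutively except for possible
detours from a vertex of `seq` to a clause vertex and immediately back. -/
def TraversedIn {m h : ℕ} (L : List (Vtx m h)) (seq : List (Vtx m h)) : Prop :=
  ∃ f : Fin seq.length → ℕ,
    (∀ t, f t < L.length) ∧
    (∀ t, L.getD (f t) Vtx.mid = seq.get t) ∧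
    (∀ (t : ℕ) (ht : t + 1 < seq.length),
      f ⟨t + 1, ht⟩ = f ⟨t, by omega⟩ + 1 ∨
        (f ⟨t + 1, ht⟩ = f ⟨t, by omega⟩ + 2 ∧
          ∃ k', L.getD (f ⟨t, by omega⟩ + 1) Vtx.mid = Vtx.clauseV k'))

/-- The `(k+1)`-st clause box of gadget `g` is traversed in pattern `⊓` by the
segment `L` (each of its vertices being visited exactly once, with possible detours
via clause vertices). -/
def SqcapBox {m h : ℕ} (L : List (Vtx m h)) (g : Fin (2 * m)) (k : Fin h) : Prop :=
  (∀ sec p, L.count (boxV g k sec p) = 1) ∧ ∃ flip, TraversedIn L (sqcapSeq g k flip)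

/-- The `(k+1)`-st clause box of gadget `g` is traversed in pattern `⊔` by the
segment `L`. -/
def SqcupBox {m h : ℕ} (L : List (Vtx m h)) (g : Fin (2 * m)) (k : Fin h) : Prop :=
  (∀ sec p, L.count (boxV g k sec p) = 1) ∧ ∃ flip, TraversedIn L (sqcupSeq g k flip)

/-- The gadget of `x_{i+1}^0`, as an index in `Fin (2*m)`. -/
def g0 {m : ℕ} (i : Fin m) : Fin (2 * m) := ⟨(i : ℕ), by have := i.isLt; omega⟩

/-- The gadget of `x_{i+1}^1`, as an index in `Fin (2*m)`. -/
def g1 {m : ℕ} (i : Fin m) : Fin (2 * m) := ⟨(i : ℕ) + m, by have := i.isLt; omega⟩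

/-- Gadget `g` is traversed in the `true` direction by the segment `L`: the long edges
are used to enter the left side `LS` from the top vertex and to leave from the right
side `RS` to the bottom vertex. -/
def TravTrue {m h : ℕ} (L : List (Vtx m h)) (g : Fin (2 * m)) : Prop :=
  (∃ n, n + 1 < L.length ∧ L.getD n Vtx.mid = topVtx g ∧
      L.getD (n + 1) Vtx.mid = Vtx.side g false 0) ∧
  (∃ n, n + 1 < L.length ∧ L.getD n Vtx.mid = Vtx.side g true 2 ∧
      L.getD (n + 1) Vtx.mid = botVtx g)

/-- Gadget `g` is traversed in the `false` direction by the segment `L`: the long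
edges are used to enter the right side `RS` from the top vertex and to leave from the
left side `LS` to the bottom vertex. -/
def TravFalse {m h : ℕ} (L : List (Vtx m h)) (g : Fin (2 * m)) : Prop :=
  (∃ n, n + 1 < L.length ∧ L.getD n Vtx.mid = topVtx g ∧
      L.getD (n + 1) Vtx.mid = Vtx.side g true 0) ∧
  (∃ n, n + 1 < L.length ∧ L.getD n Vtx.mid = Vtx.side g false 2 ∧
      L.getD (n + 1) Vtx.mid = botVtx g)

/-- Position of the first visit, within the first `m` fragments of the segment `L`
(i.e. at positions preceded by at most `m` occurrences of special vertices), of the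
pivot pair `{pvt_{i+1}^L, pvt_{i+1}^R}`. -/
noncomputable def firstVisitFH (m h : ℕ) (L : List (Vtx m h)) (i : Fin m) : ℕ :=
  sInf {n | n < L.length ∧ (L.take (n + 1)).countP isSpecial ≤ m ∧
    (L.getD n Vtx.mid = Vtx.pvt i false ∨ L.getD n Vtx.mid = Vtx.pvt i true)}

/-- Position of the first visit, within the last `m` fragments of the segment `L`
(i.e. at positions preceded by at least `m+1` occurrences of special vertices), of the
pivot pair `{pvt_{i+1}^L, pvt_{i+1}^R}`. -/
noncomputable def firstVisitSH (m h : ℕ) (L : List (Vtx m h)) (i : Fin m) : ℕ :=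
  sInf {n | n < L.length ∧ m + 1 ≤ (L.take (n + 1)).countP isSpecial ∧
    (L.getD n Vtx.mid = Vtx.pvt i false ∨ L.getD n Vtx.mid = Vtx.pvt i true)}

/-- `φ(j)` is satisfied: every clause is satisfied by the assignment `σ`, where the
variable `x_{i+1}^0` of clause `c_{k+1}` reads `σ j i` and the variable `x_{i+1}^1`
reads `σ (j+1) i`. -/
def SatisfiesAt (m h : ℕ) (occurs : Fin h → Fin (2 * m) → Option Bool)
    (σ : ℕ → Fin m → Bool) (j : ℕ) : Prop :=
  ∀ k : Fin h, ∃ (g : Fin (2 * m)) (b : Bool), occurs k g = some b ∧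
    (if hg : (g : ℕ) < m then σ j ⟨(g : ℕ), hg⟩ = b
     else σ (j + 1) ⟨(g : ℕ) - m, by have := g.isLt; omega⟩ = b)


/-! ### Auxiliary -/

def Bc (m h : ℕ) : ℕ := (3*m+1) * l h

def Qc (m h : ℕ) : ℕ :=
  l h * m * (3*m+1) + l h * m * (3*m+2) + l h * m + (12*h+17) + h

lemma T_eq (m h : ℕ) : T m h = 4 * Qc m h := by unfold T Qc l; ring

section FTlem
variable (m h : ℕ) (occurs : Fin h → Fin (2 * m) → Option Bool)

set_option maxHeartbeats 2000000 in
set_option maxRecDepth 100000 in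
lemma FT_main (hm : 2 < m) (hh : 0 < h) (v w : Vtx m h) (hne : v ≠ w) :
    2 ≤ FT m h occurs v w ∧
    (isSpecial v = true ∨ isSpecial w = true → Bc m h ≤ FT m h occurs v w) ∧
    (isSpecial v = true ∧ isSpecial w = true → 2 * Bc m h ≤ FT m h occurs v w) := by
  have hT : T m h = 4 * Qc m h := T_eq m h
  have hB : Bc m h = (3*m+1) * l h := rfl
  have hlpos : 34 ≤ l h := by unfold l; omega
  have hA1 : 2 ≤ (3*m+1) * l h := by nlinarith
  have hA2 : (3*m+1) * l h ≤ (3*m+2) * l h := by nlinarith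
  have hA5 : (3*m+2) * l h ≤ Qc m h := by unfold Qc; nlinarith
  have hA6 : (3*m+1) * l h ≤ Qc m h := by unfold Qc; nlinarith
  have hT4 : T m h / 4 = Qc m h := by omega
  cases v <;> cases w <;>
    simp only [FT, adjFT, longTop, longBot, isSpecial, hne, if_neg, ne_eq,
      not_false_iff] <;>
    (try split_ifs) <;>
    (try casesm* _ ∧ _) <;> (try subst_vars) <;>
    (try simp_all) <;>
    (try split_ifs) <;>
    (try simp_all) <;>
    omega

end FTlem


lemma FT_mid_facts (m h : ℕ) (occurs : Fin h → Fin (2 * m) → Option Bool)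
    (x : Vtx m h) (hx : x ≠ Vtx.mid) :
    FT m h occurs x Vtx.mid = FT m h occurs Vtx.mid x ∧
    (x = Vtx.top ∨ x = Vtx.bot → FT m h occurs Vtx.mid x = T m h / 4) ∧
    (x ≠ Vtx.top → x ≠ Vtx.bot → FT m h occurs Vtx.mid x = 2 * T m h) := by
  cases x <;> simp_all [FT, adjFT]

lemma arith_facts (m h : ℕ) (hm : 2 < m) (hh : 0 < h) :
    2 ≤ Bc m h ∧ Bc m h ≤ Qc m h ∧ l h + 2*h < Bc m h ∧
      2 * Qc m h < (4*m+2) * Bc m h ∧ Qc m h < 4*m*(Bc m h) := by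
  have h9 : 9 ≤ m * m := Nat.mul_le_mul hm hm
  unfold Bc Qc l
  refine ⟨by nlinarith, by nlinarith, by nlinarith, by nlinarith, by nlinarith⟩

/-- duration over `getD`-indexed edges. -/
lemma durL_getD {V : Type*} (FT : V → V → ℕ) (d : V) :
    ∀ L : List V, durL FT L =
      ∑ t ∈ Finset.range (L.length - 1), FT (L.getD t d) (L.getD (t+1) d) := by
  intro L
  induction L with
  | nil => simp [durL]
  | cons x L ih =>
    cases L with
    | nil => simp [durL]
    | cons y L' =>
      have : durL FT (x :: y :: L') = FT x y + durL FT (y :: L') := by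
        simp [durL]
      rw [this, ih]
      have hlen : (x :: y :: L').length - 1 = ((y :: L').length - 1) + 1 := by simp
      rw [hlen, Finset.sum_range_succ']
      simp
      omega

/-- the key counting lemma. -/
lemma count_aux {V : Type*} (sp : V → Bool) (FT : V → V → ℕ) (B : ℕ)
    (h1 : ∀ v w, v ≠ w → (sp v = true ∨ sp w = true) → B ≤ FT v w)
    (h2 : ∀ v w, v ≠ w → sp v = true → sp w = true → 2*B ≤ FT v w) :
    ∀ (L : List V) (x : V), List.Chain' (· ≠ ·) (x :: L) →
      2*B*((x :: L).countP sp) ≤ durL FT (x :: L) + (if sp x then B else 0) + B := by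
  intro L
  induction L with
  | nil =>
    intro x _
    by_cases hx : sp x <;> simp [durL, List.countP_cons, hx]
    omega
  | cons y L' ih =>
    intro x hch
    simp only [List.Chain'] at hch
    rw [List.isChain_cons_cons] at hch
    obtain ⟨hxy, hch⟩ := hch
    have IH := ih y hch
    have hdur : durL FT (x :: y :: L') = FT x y + durL FT (y :: L') := by simp [durL]
    have hcnt : (x :: y :: L').countP sp = (y :: L').countP sp + (if sp x then 1 else 0) := by
      simp [List.countP_cons]
    rw [hdur, hcnt]
    by_cases hx : sp x <;> by_cases hy : sp y <;>
      simp only [hx, hy, if_true, if_false, Bool.false_eq_true, add_zero, mul_add,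
        mul_one] at IH ⊢
    · have := h2 x y hxy hx hy
      omega
    · have := h1 x y hxy (Or.inl hx)
      omega
    · have := h1 x y hxy (Or.inr hy)
      omega
    · omega

/-- the finite set of special vertices. -/
def SFin (m h : ℕ) : Finset (Vtx m h) :=
  insert Vtx.top (insert Vtx.bot (Finset.image Vtx.shared Finset.univ))

lemma mem_SFin (m h : ℕ) (x : Vtx m h) : isSpecial x = true ↔ x ∈ SFin m h := by
  cases x <;> simp [isSpecial, SFin]

lemma card_SFin (m h : ℕ) (hm : 2 < m) : (SFin m h).card = 2*m+1 := by
  rw [SFin]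
  rw [Finset.card_insert_of_notMem (by simp), Finset.card_insert_of_notMem (by simp)]
  rw [Finset.card_image_of_injective _ (fun a b hab => by simpa using hab)]
  simp
  omega

lemma countP_eq_sum_count {V : Type*} [DecidableEq V] (sp : V → Bool) (F : Finset V)
    (hc : ∀ x, sp x = true ↔ x ∈ F) (L : List V) :
    L.countP sp = ∑ v ∈ F, L.count v := by
  induction L with
  | nil => simp
  | cons x L ih =>
    rw [List.countP_cons, ih]
    have hsum : ∑ v ∈ F, (x :: L).count v
        = ∑ v ∈ F, (L.count v + if x = v then 1 else 0) := by
      refine Finset.sum_congr rfl fun v _ => ?_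
      rw [List.count_cons]
      simp [beq_iff_eq]
    rw [hsum, Finset.sum_add_distrib, Finset.sum_ite_eq F x (fun _ => 1)]
    by_cases hx : sp x
    · simp [hx, (hc x).1 hx]
    · have : x ∉ F := fun hmem => hx ((hc x).2 hmem)
      simp [hx, this]

section Durlem
variable {V : Type*} (FT : V → V → ℕ) (s : ℕ → V)

lemma dur_split {a c b : ℕ} (h1 : a ≤ c) (h2 : c ≤ b) :
    dur FT s a b = dur FT s a c + dur FT s c b :=
  (Finset.sum_Ico_consecutive _ h1 h2).symm

lemma dur_one (a : ℕ) : dur FT s a (a+1) = FT (s a) (s (a+1)) := by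
  simp [dur, Finset.sum_Ico_eq_sum_range]

lemma dur_shift {a b : ℕ} (h : ∀ k, s (a+k) = s (b+k)) (c : ℕ) :
    dur FT s a (a+c) = dur FT s b (b+c) := by
  unfold dur
  rw [Finset.sum_Ico_eq_sum_range, Finset.sum_Ico_eq_sum_range]
  simp only [Nat.add_sub_cancel_left]
  refine Finset.sum_congr rfl fun k _ => ?_
  have h1 := h k
  have h2 := h (k+1)
  rw [show a + k + 1 = a + (k+1) by omega, show b + k + 1 = b + (k+1) by omega, h1, h2]

end Durlem

section WordLem
variable {m h p : ℕ} (segs : Fin p → List (Vtx m h))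

/-- offset of the `j`-th block inside the word. -/
def offW (j : Fin p) : ℕ :=
  (((List.ofFn (fun i => Vtx.mid :: segs i)).take j.val).flatten).length

lemma word_decomp (j : Fin p) :
    word segs = (((List.ofFn (fun i => Vtx.mid :: segs i)).take j.val).flatten
      ++ (Vtx.mid :: segs j))
      ++ (((List.ofFn (fun i => Vtx.mid :: segs i)).drop (j.val+1)).flatten) := by
  have hj : j.val < (List.ofFn (fun i => Vtx.mid :: segs i)).length := by
    simpa using j.isLt
  conv_lhs =>
    rw [word, ← List.take_append_drop j.val (List.ofFn (fun i => Vtx.mid :: segs i))]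
  rw [List.flatten_append, List.drop_eq_getElem_cons hj, List.getElem_ofFn]
  simp [List.append_assoc]

lemma offW_block_le (j : Fin p) :
    offW segs j + (1 + (segs j).length) ≤ (word segs).length := by
  rw [word_decomp segs j]
  simp [offW]
  omega

lemma word_getD_block (j : Fin p) (t : ℕ) (ht : t < 1 + (segs j).length) :
    (word segs).getD (offW segs j + t) Vtx.mid = (Vtx.mid :: segs j).getD t Vtx.mid := by
  rw [word_decomp segs j]
  rw [List.getD_append _ _ _ _ (by simp [offW]; omega)]
  rw [List.getD_append_right _ _ _ _ (by simp [offW])]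
  congr 1
  simp [offW]

lemma offW_zero (hp : 0 < p) : offW segs ⟨0, hp⟩ = 0 := rfl

lemma offW_succ (j : Fin p) (hj : j.val + 1 < p) :
    offW segs ⟨j.val+1, hj⟩ = offW segs j + (1 + (segs j).length) := by
  unfold offW
  rw [List.take_succ]
  have hjl : j.val < (List.ofFn (fun i => Vtx.mid :: segs i)).length := by
    simpa using j.isLt
  rw [List.getElem?_eq_getElem hjl, List.getElem_ofFn]
  simp
  omega

lemma word_length_last (j : Fin p) (hj : j.val + 1 = p) :
    (word segs).length = offW segs j + (1 + (segs j).length) := by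
  conv_lhs => rw [word_decomp segs j]
  have : (List.ofFn (fun i => Vtx.mid :: segs i)).drop (j.val+1) = [] := by
    apply List.drop_eq_nil_of_le
    simp [hj]
  rw [this]
  simp [offW]
  omega

/-- the cyclically next index. -/
def nxtF (hp : 0 < p) (j : Fin p) : Fin p :=
  if hj : j.val + 1 < p then ⟨j.val+1, hj⟩ else ⟨0, hp⟩

lemma offW_nxt (hp : 0 < p) (j : Fin p) :
    (offW segs j + (1 + (segs j).length)) % (word segs).length
      = offW segs (nxtF hp j) := by
  unfold nxtF
  split
  · next hj =>
    rw [← offW_succ segs j hj]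
    apply Nat.mod_eq_of_lt
    have := offW_block_le segs ⟨j.val+1, hj⟩
    omega
  · next hj =>
    have hjp : j.val + 1 = p := by have := j.isLt; omega
    rw [← word_length_last segs j hjp, Nat.mod_self, offW_zero]

end WordLem

/-- In every periodic solution, either every segment starts with
`v_top` and ends with `v_bot`, or every segment starts with `v_bot` and ends with
`v_top`. -/
theorem segments_top_bot_or_bot_top (m h : ℕ) (hm : 2 < m) (hh : 0 < h)
    (occurs : Fin h → Fin (2 * m) → Option Bool)
    (p : ℕ) (hp : 0 < p) (segs : Fin p → List (Vtx m h))
    (hne : ∀ j, segs j ≠ [])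
    (hmid : ∀ j, Vtx.mid ∉ segs j)
    (hsol : IsSolution (RD m h) (FT m h occurs) (pathOf segs)) :
    (∀ j, (segs j).head? = some Vtx.top ∧ (segs j).getLast? = some Vtx.bot) ∨
      (∀ j, (segs j).head? = some Vtx.bot ∧ (segs j).getLast? = some Vtx.top) := by
  classical
  set s : ℕ → Vtx m h := pathOf segs with hsdef
  set F : Vtx m h → Vtx m h → ℕ := FT m h occurs with hFdef
  set N : ℕ := (word segs).length with hNdef
  obtain ⟨hstep, hvisit, hRD⟩ := hsol
  obtain ⟨hB2, hBQ, hBl, hCQ, hOQ⟩ := arith_facts m h hm hh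
  have hT : T m h = 4 * Qc m h := T_eq m h
  have hT4 : T m h / 4 = Qc m h := by omega
  have hQ1 : 1 ≤ Qc m h := by omega
  -- FT bounds
  have hFpos : ∀ v w : Vtx m h, v ≠ w → 2 ≤ F v w :=
    fun v w hvw => (FT_main m h occurs hm hh v w hvw).1
  have hFsp : ∀ v w : Vtx m h, v ≠ w → isSpecial v = true ∨ isSpecial w = true →
      Bc m h ≤ F v w := fun v w hvw hsp => (FT_main m h occurs hm hh v w hvw).2.1 hsp
  have hFsp2 : ∀ v w : Vtx m h, v ≠ w → isSpecial v = true → isSpecial w = true →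
      2 * Bc m h ≤ F v w :=
    fun v w hvw h1 h2 => (FT_main m h occurs hm hh v w hvw).2.2 ⟨h1, h2⟩
  have hFmid : ∀ x : Vtx m h, x ≠ Vtx.mid →
      (F x Vtx.mid = F Vtx.mid x) ∧
      (Qc m h ≤ F x Vtx.mid ∧ Qc m h ≤ F Vtx.mid x) ∧
      (x = Vtx.top ∨ x = Vtx.bot → F Vtx.mid x = Qc m h ∧ F x Vtx.mid = Qc m h) ∧
      (¬(x = Vtx.top ∨ x = Vtx.bot) → F Vtx.mid x = 2 * T m h) := by
    intro x hx
    obtain ⟨e1, e2, e3⟩ := FT_mid_facts m h occurs x hx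
    by_cases hx2 : x = Vtx.top ∨ x = Vtx.bot
    · have := e2 hx2
      rw [hT4] at this
      exact ⟨by rw [hFdef, e1], ⟨by rw [hFdef, e1, this], by rw [hFdef, this]⟩,
        fun _ => ⟨by rw [hFdef, this], by rw [hFdef, e1, this]⟩, fun hc => absurd hx2 hc⟩
    · push_neg at hx2
      have := e3 hx2.1 hx2.2
      refine ⟨by rw [hFdef, e1], ⟨by rw [hFdef, e1, this]; omega, by rw [hFdef, this]; omega⟩,
        fun hc => absurd hc (by push_neg; exact hx2), fun _ => by rw [hFdef, this]⟩
  -- basics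
  have hlen : ∀ j, 1 ≤ (segs j).length := fun j => List.length_pos_iff.mpr (hne j)
  have hfits : ∀ j, offW segs j + (1 + (segs j).length) ≤ N :=
    fun j => offW_block_le segs j
  have hN2 : 2 ≤ N := le_trans (by have := hlen ⟨0, hp⟩; omega) (hfits ⟨0, hp⟩)
  -- decoding
  have hdec : ∀ n, s n = (word segs).getD (n % N) Vtx.mid := fun n => rfl
  have hsmod : ∀ a b, a % N = b % N → s a = s b := by
    intro a b hab; rw [hdec, hdec, hab]
  have hblk : ∀ (j : Fin p) (t : ℕ), t < 1 + (segs j).length →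
      s (N + (offW segs j + t)) = (Vtx.mid :: segs j).getD t Vtx.mid := by
    intro j t ht
    rw [hdec, Nat.add_mod_left, Nat.mod_eq_of_lt (by have := hfits j; omega)]
    exact word_getD_block segs j t ht
  have hblk0 : ∀ j, s (N + offW segs j) = Vtx.mid := by
    intro j
    have := hblk j 0 (by omega)
    simpa using this
  have hblkt : ∀ (j : Fin p) (t : ℕ), t < (segs j).length →
      s (N + offW segs j + 1 + t) = (segs j).getD t Vtx.mid := by
    intro j t ht
    have h1 := hblk j (1+t) (by omega)
    rw [show N + (offW segs j + (1+t)) = N + offW segs j + 1 + t from by omega] at h1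
    rw [h1]
    rw [show 1 + t = t + 1 from by omega, List.getD_cons_succ]
  have hkey : ∀ (j : Fin p) (k : ℕ),
      s (N + offW segs j + 1 + (segs j).length + k)
        = s (N + offW segs (nxtF hp j) + k) := by
    intro j k
    apply hsmod
    have h3 : offW segs (nxtF hp j) < N := by
      have := hfits (nxtF hp j); omega
    have e1 : (N + offW segs j + 1 + (segs j).length) % N
        = (N + offW segs (nxtF hp j)) % N := by
      rw [show N + offW segs j + 1 + (segs j).length
          = N + (offW segs j + (1 + (segs j).length)) from by omega]
      rw [Nat.add_mod_left, Nat.add_mod_left, offW_nxt segs hp j,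
        Nat.mod_eq_of_lt h3]
    exact (Nat.ModEq.add_right k e1)
  have hblkmid : ∀ j : Fin p, s (N + offW segs j + 1 + (segs j).length) = Vtx.mid := by
    intro j
    have := hkey j 0
    simp only [Nat.add_zero] at this
    rw [this, hblk0]
  -- block interior durations
  have hdurL : ∀ j : Fin p,
      dur F s (N + offW segs j + 1) (N + offW segs j + (segs j).length)
        = durL F (segs j) := by
    intro j
    rw [durL_getD F Vtx.mid (segs j)]
    unfold dur
    rw [Finset.sum_Ico_eq_sum_range]
    rw [show N + offW segs j + (segs j).length - (N + offW segs j + 1)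
        = (segs j).length - 1 from by omega]
    refine Finset.sum_congr rfl fun t ht => ?_
    rw [Finset.mem_range] at ht
    have e1 := hblkt j t (by omega)
    have e2 := hblkt j (t+1) (by omega)
    rw [show N + offW segs j + 1 + t + 1 = N + offW segs j + 1 + (t+1) from by omega]
    rw [e1, e2]
  -- ### segment ends are top/bot and the budget
  have hA : ∀ j : Fin p,
      ((segs j).getD 0 Vtx.mid = Vtx.top ∨ (segs j).getD 0 Vtx.mid = Vtx.bot) ∧
      ((segs j).getD ((segs j).length - 1) Vtx.mid = Vtx.top ∨
        (segs j).getD ((segs j).length - 1) Vtx.mid = Vtx.bot) ∧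
      durL F (segs j) ≤ 2 * Qc m h := by
    intro j
    have hlenj := hlen j
    have hmem : ∀ t, t < (segs j).length → (segs j).getD t Vtx.mid ∈ segs j := by
      intro t ht
      rw [List.getD_eq_getElem (segs j) _ ht]
      exact List.getElem_mem ht
    set M : ℕ := N + offW segs j with hM
    have h0 : s M = Vtx.mid := hblk0 j
    have hmid2 : s (M + (segs j).length + 1) = Vtx.mid := by
      have := hblkmid j
      rw [show M + 1 + (segs j).length = M + (segs j).length + 1 from by omega] at this
      exact this
    have hcons : ∀ i, M < i → i < M + (segs j).length + 1 → s i ≠ Vtx.mid := by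
      intro i h1 h2
      have ht : i - (M+1) < (segs j).length := by omega
      have e := hblkt j _ ht
      rw [show M + 1 + (i - (M+1)) = i from by omega] at e
      rw [e]
      intro hc
      exact hmid j (hc ▸ hmem _ ht)
    have hdur := hRD Vtx.mid M (M + (segs j).length + 1) (by omega) h0 hmid2 hcons
    have hRDmid : RD m h Vtx.mid = T m h := rfl
    rw [hRDmid] at hdur
    -- split the duration
    have q1 : dur F s M (M + (segs j).length + 1)
        = dur F s M (M+1) + dur F s (M+1) (M + (segs j).length + 1) :=
      dur_split F s (by omega) (by omega)
    have q2 : dur F s (M+1) (M + (segs j).length + 1)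
        = dur F s (M+1) (M + (segs j).length)
          + dur F s (M + (segs j).length) (M + (segs j).length + 1) :=
      dur_split F s (by omega) (by omega)
    have v1 : dur F s M (M+1) = F (s M) (s (M+1)) := dur_one F s M
    have v2 : dur F s (M + (segs j).length) (M + (segs j).length + 1)
        = F (s (M + (segs j).length)) (s (M + (segs j).length + 1)) :=
      dur_one F s _
    have hhead : s (M+1) = (segs j).getD 0 Vtx.mid := by
      have := hblkt j 0 (by omega)
      simpa using this
    have hlast : s (M + (segs j).length) = (segs j).getD ((segs j).length - 1) Vtx.mid := by
      have := hblkt j ((segs j).length - 1) (by omega)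
      rw [show M + 1 + ((segs j).length - 1) = M + (segs j).length from by omega] at this
      exact this
    have hheadne : (segs j).getD 0 Vtx.mid ≠ Vtx.mid := fun hc =>
      hmid j (hc ▸ hmem 0 (by omega))
    have hlastne : (segs j).getD ((segs j).length - 1) Vtx.mid ≠ Vtx.mid := fun hc =>
      hmid j (hc ▸ hmem _ (by omega))
    obtain ⟨usym, ⟨u1, u2⟩, u3, u4⟩ := hFmid ((segs j).getD 0 Vtx.mid) hheadne
    obtain ⟨wsym, ⟨w1, w2⟩, w3, w4⟩ := hFmid ((segs j).getD ((segs j).length - 1) Vtx.mid) hlastne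
    rw [h0, hhead] at v1
    rw [hlast, hmid2] at v2
    have hdurblock : dur F s (M+1) (M + (segs j).length) = durL F (segs j) := hdurL j
    -- head must be top or bot
    have hheadtb : (segs j).getD 0 Vtx.mid = Vtx.top ∨ (segs j).getD 0 Vtx.mid = Vtx.bot := by
      by_contra hc
      have := u4 hc
      omega
    have hlasttb : (segs j).getD ((segs j).length - 1) Vtx.mid = Vtx.top ∨
        (segs j).getD ((segs j).length - 1) Vtx.mid = Vtx.bot := by
      by_contra hc
      have e := w4 hc
      rw [← wsym] at e
      omega
    have e1 := (u3 hheadtb).1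
    have e2 := (w3 hlasttb).2
    exact ⟨hheadtb, hlasttb, by omega⟩
  have hheadtb : ∀ j : Fin p,
      (segs j).getD 0 Vtx.mid = Vtx.top ∨ (segs j).getD 0 Vtx.mid = Vtx.bot :=
    fun j => (hA j).1
  have hlasttb : ∀ j : Fin p,
      (segs j).getD ((segs j).length - 1) Vtx.mid = Vtx.top ∨
        (segs j).getD ((segs j).length - 1) Vtx.mid = Vtx.bot :=
    fun j => (hA j).2.1
  have hbudget : ∀ j, durL F (segs j) ≤ 2 * Qc m h := fun j => (hA j).2.2
  -- ### straddling occurrences of a vertex missing from a segment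
  have hstrad : ∀ (j : Fin p) (v : Vtx m h), v ≠ Vtx.mid → v ∉ segs j →
      ∃ a b, s a = v ∧ s b = v ∧ a + 1 ≤ N + offW segs j ∧
        N + offW segs j + (segs j).length + 2 ≤ b ∧
        ((segs (nxtF hp j)).getD 0 Vtx.mid ≠ v →
          N + offW segs j + (segs j).length + 3 ≤ b) ∧
        (∀ i, a < i → i < b → s i ≠ v) := by
    intro j v hvmid hvseg
    have hlenj := hlen j
    have hmemD : ∀ t, t < (segs j).length → (segs j).getD t Vtx.mid ∈ segs j := by
      intro t ht; rw [List.getD_eq_getElem (segs j) _ ht]; exact List.getElem_mem ht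
    obtain ⟨n₀, _, hn₀⟩ := hvisit v 0
    have hrmod : (n₀ % N) % N = n₀ % N := Nat.mod_mod_of_dvd n₀ dvd_rfl
    have hr : s (n₀ % N) = v := by rw [hsmod _ _ hrmod]; exact hn₀
    have hrM : n₀ % N ≤ N + offW segs j - 1 := by
      have : n₀ % N < N := Nat.mod_lt _ (by omega)
      omega
    have haP : s (Nat.findGreatest (fun n => s n = v) (N + offW segs j - 1)) = v :=
      Nat.findGreatest_spec (P := fun n => s n = v) hrM hr
    have haM := Nat.findGreatest_le (P := fun n => s n = v) (N + offW segs j - 1)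
    have hex : ∃ n, (N + offW segs j + (segs j).length + 1 < n ∧ s n = v) := by
      refine ⟨n₀ % N + N * (N + offW segs j + (segs j).length + 2), ?_, ?_⟩
      · have h1 : N + offW segs j + (segs j).length + 2
            ≤ N * (N + offW segs j + (segs j).length + 2) :=
          Nat.le_mul_of_pos_left _ (by omega)
        omega
      · rw [hsmod _ (n₀ % N) (by rw [Nat.add_mul_mod_self_left, hrmod])]
        exact hr
    obtain ⟨hb1, hb2⟩ := Nat.find_spec hex
    refine ⟨Nat.findGreatest (fun n => s n = v) (N + offW segs j - 1), Nat.find hex,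
      haP, hb2, by omega, by omega, ?_, ?_⟩
    · intro hnext
      have hpos : s (N + offW segs j + (segs j).length + 2)
          = (segs (nxtF hp j)).getD 0 Vtx.mid := by
        have e := hkey j 1
        rw [show N + offW segs j + 1 + (segs j).length + 1
            = N + offW segs j + (segs j).length + 2 from by omega] at e
        rw [e]
        have e2 := hblkt (nxtF hp j) 0 (by have := hlen (nxtF hp j); omega)
        simpa using e2
      have hne2 : Nat.find hex ≠ N + offW segs j + (segs j).length + 2 := by
        intro hc
        rw [hc, hpos] at hb2
        exact hnext hb2
      omega
    · intro i h1 h2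
      by_cases hi1 : i ≤ N + offW segs j - 1
      · exact Nat.findGreatest_is_greatest h1 hi1
      · by_cases hi2 : i ≤ N + offW segs j + (segs j).length + 1
        · by_cases hi3 : i = N + offW segs j
          · rw [hi3, hblk0 j]; intro hc; exact hvmid hc.symm
          · by_cases hi4 : i = N + offW segs j + (segs j).length + 1
            · have e := hblkmid j
              rw [show N + offW segs j + 1 + (segs j).length
                  = N + offW segs j + (segs j).length + 1 from by omega] at e
              rw [hi4, e]; intro hc; exact hvmid hc.symm
            · have ht : i - (N + offW segs j + 1) < (segs j).length := by omega
              have e := hblkt j _ ht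
              rw [show N + offW segs j + 1 + (i - (N + offW segs j + 1)) = i
                  from by omega] at e
              rw [e]; intro hc; exact hvseg (hc ▸ hmemD _ ht)
        · intro hc
          exact (Nat.find_min hex h2) ⟨by omega, hc⟩
  -- ### the gap argument for non-top/bot vertices
  have hgap : ∀ (j : Fin p) (v : Vtx m h), v ≠ Vtx.mid → v ≠ Vtx.top → v ≠ Vtx.bot →
      RD m h v < 4 * Qc m h + Bc m h → v ∈ segs j := by
    intro j v hvmid hvtop hvbot hRDv
    by_contra hvseg
    obtain ⟨a, b, ha, hb, hab1, hab2, hab3, hcons⟩ := hstrad j v hvmid hvseg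
    have hnext : (segs (nxtF hp j)).getD 0 Vtx.mid ≠ v := by
      rcases hheadtb (nxtF hp j) with e | e <;> rw [e]
      · exact fun hc => hvtop hc.symm
      · exact fun hc => hvbot hc.symm
    have hab3' := hab3 hnext
    set M := N + offW segs j with hM
    have hlenj := hlen j
    have q1 : dur F s a b = dur F s a (M-1) + dur F s (M-1) b :=
      dur_split F s (by omega) (by omega)
    have q2 : dur F s (M-1) b = dur F s (M-1) (M-1+1) + dur F s (M-1+1) b :=
      dur_split F s (by omega) (by omega)
    rw [show M - 1 + 1 = M from by omega] at q2
    have q3 : dur F s M b = dur F s M (M+1) + dur F s (M+1) b :=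
      dur_split F s (by omega) (by omega)
    have q4 : dur F s (M+1) b = dur F s (M+1) (M + (segs j).length)
        + dur F s (M + (segs j).length) b :=
      dur_split F s (by omega) (by omega)
    have q5 : dur F s (M + (segs j).length) b
        = dur F s (M + (segs j).length) (M + (segs j).length + 1)
        + dur F s (M + (segs j).length + 1) b :=
      dur_split F s (by omega) (by omega)
    have q6 : dur F s (M + (segs j).length + 1) b
        = dur F s (M + (segs j).length + 1) (M + (segs j).length + 2)
        + dur F s (M + (segs j).length + 2) b :=
      dur_split F s (by omega) (by omega)
    have q7 : dur F s (M + (segs j).length + 2) b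
        = dur F s (M + (segs j).length + 2) (M + (segs j).length + 3)
        + dur F s (M + (segs j).length + 3) b :=
      dur_split F s (by omega) (by omega)
    have v1 : dur F s (M-1) (M-1+1) = F (s (M-1)) (s (M-1+1)) := dur_one F s _
    rw [show M - 1 + 1 = M from by omega] at v1
    have v2 : dur F s M (M+1) = F (s M) (s (M+1)) := dur_one F s _
    have v3 : dur F s (M + (segs j).length) (M + (segs j).length + 1)
        = F (s (M + (segs j).length)) (s (M + (segs j).length + 1)) := dur_one F s _
    have v4 : dur F s (M + (segs j).length + 1) (M + (segs j).length + 2)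
        = F (s (M + (segs j).length + 1)) (s (M + (segs j).length + 2)) := dur_one F s _
    have v5 : dur F s (M + (segs j).length + 2) (M + (segs j).length + 3)
        = F (s (M + (segs j).length + 2)) (s (M + (segs j).length + 3)) := dur_one F s _
    have w0 : s M = Vtx.mid := hblk0 j
    have wmid : s (M + (segs j).length + 1) = Vtx.mid := by
      have e := hblkmid j
      rw [show M + 1 + (segs j).length = M + (segs j).length + 1 from by omega] at e
      exact e
    have w2 : s (M + (segs j).length + 2) = (segs (nxtF hp j)).getD 0 Vtx.mid := by
      have e := hkey j 1
      rw [show M + 1 + (segs j).length + 1 = M + (segs j).length + 2 from by omega] at e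
      rw [e]
      have e2 := hblkt (nxtF hp j) 0 (by have := hlen (nxtF hp j); omega)
      simpa using e2
    have b1 : Qc m h ≤ F (s (M-1)) (s M) := by
      have e := hstep (M-1)
      rw [show M - 1 + 1 = M from by omega, w0] at e
      rw [w0]
      exact ((hFmid _ e).2.1).1
    have b2 : Qc m h ≤ F (s M) (s (M+1)) := by
      have e := hstep M
      rw [w0] at e
      rw [w0]
      exact ((hFmid _ (Ne.symm e)).2.1).2
    have b3 : Qc m h ≤ F (s (M + (segs j).length)) (s (M + (segs j).length + 1)) := by
      have e := hstep (M + (segs j).length)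
      rw [wmid] at e
      rw [wmid]
      exact ((hFmid _ e).2.1).1
    have b4 : Qc m h ≤ F (s (M + (segs j).length + 1)) (s (M + (segs j).length + 2)) := by
      have e := hstep (M + (segs j).length + 1)
      rw [wmid] at e
      rw [wmid]
      exact ((hFmid _ (Ne.symm e)).2.1).2
    have b5 : Bc m h ≤ F (s (M + (segs j).length + 2)) (s (M + (segs j).length + 3)) := by
      apply hFsp _ _ (hstep (M + (segs j).length + 2))
      left
      rw [w2]
      rcases hheadtb (nxtF hp j) with e | e <;> rw [e] <;> rfl
    have hdurRD := hRD v a b (by omega) ha hb hcons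
    omega
  have hv0 : ∀ j : Fin p, (Vtx.side (⟨0, by omega⟩ : Fin (2*m)) false 1 : Vtx m h) ∈ segs j := by
    intro j
    apply hgap j _ (by simp) (by simp) (by simp)
    have e : RD m h (Vtx.side (⟨0, by omega⟩ : Fin (2*m)) false 1 : Vtx m h)
        = T m h + l h + 2*h := rfl
    rw [e, hT]
    omega
  have hSharedMem : ∀ (j : Fin p) (k : Fin (2*m-1)), (Vtx.shared k : Vtx m h) ∈ segs j := by
    intro j k
    apply hgap j _ (by simp) (by simp) (by simp)
    have e : RD m h (Vtx.shared k : Vtx m h) = T m h + 2*h := rfl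
    rw [e, hT]
    omega
  have hlen2 : ∀ j, 2 ≤ (segs j).length := by
    intro j
    by_contra hc
    have h1 : (segs j).length = 1 := by have := hlen j; omega
    obtain ⟨x, hx⟩ := List.length_eq_one_iff.mp h1
    have h2 := hv0 j
    rw [hx] at h2
    have h3 : Vtx.side (⟨0, by omega⟩ : Fin (2*m)) false 1 = x := by
      simpa using h2
    have h4 := hheadtb j
    rw [hx, ← h3] at h4
    simp at h4
  -- ### top and bot belong to every segment
  have hTopBot : ∀ j : Fin p, (Vtx.top : Vtx m h) ∈ segs j ∧ (Vtx.bot : Vtx m h) ∈ segs j := by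
    have key : ∀ (j : Fin p) (v : Vtx m h), v ≠ Vtx.mid → RD m h v = T m h → v ∈ segs j := by
      intro j v hvmid hRDv
      by_contra hvseg
      obtain ⟨a, b, ha, hb, hab1, hab2, _, hcons⟩ := hstrad j v hvmid hvseg
      set M := N + offW segs j with hM
      have hlenj := hlen2 j
      have q1 : dur F s a b = dur F s a (M-1) + dur F s (M-1) b :=
        dur_split F s (by omega) (by omega)
      have q2 : dur F s (M-1) b = dur F s (M-1) (M-1+1) + dur F s (M-1+1) b :=
        dur_split F s (by omega) (by omega)
      rw [show M - 1 + 1 = M from by omega] at q2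
      have q3 : dur F s M b = dur F s M (M+1) + dur F s (M+1) b :=
        dur_split F s (by omega) (by omega)
      have q4 : dur F s (M+1) b = dur F s (M+1) (M+2) + dur F s (M+2) b :=
        dur_split F s (by omega) (by omega)
      have q5 : dur F s (M+2) b = dur F s (M+2) (M + (segs j).length)
          + dur F s (M + (segs j).length) b :=
        dur_split F s (by omega) (by omega)
      have q6 : dur F s (M + (segs j).length) b
          = dur F s (M + (segs j).length) (M + (segs j).length + 1)
          + dur F s (M + (segs j).length + 1) b :=
        dur_split F s (by omega) (by omega)
      have q7 : dur F s (M + (segs j).length + 1) b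
          = dur F s (M + (segs j).length + 1) (M + (segs j).length + 2)
          + dur F s (M + (segs j).length + 2) b :=
        dur_split F s (by omega) (by omega)
      have v1 : dur F s (M-1) (M-1+1) = F (s (M-1)) (s (M-1+1)) := dur_one F s _
      rw [show M - 1 + 1 = M from by omega] at v1
      have v2 : dur F s M (M+1) = F (s M) (s (M+1)) := dur_one F s _
      have v2' : dur F s (M+1) (M+2) = F (s (M+1)) (s (M+1+1)) := dur_one F s _
      rw [show M + 1 + 1 = M+2 from by omega] at v2'
      have v3 : dur F s (M + (segs j).length) (M + (segs j).length + 1)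
          = F (s (M + (segs j).length)) (s (M + (segs j).length + 1)) := dur_one F s _
      have v4 : dur F s (M + (segs j).length + 1) (M + (segs j).length + 2)
          = F (s (M + (segs j).length + 1)) (s (M + (segs j).length + 2)) := dur_one F s _
      have w0 : s M = Vtx.mid := hblk0 j
      have wmid : s (M + (segs j).length + 1) = Vtx.mid := by
        have e := hblkmid j
        rw [show M + 1 + (segs j).length = M + (segs j).length + 1 from by omega] at e
        exact e
      have b1 : Qc m h ≤ F (s (M-1)) (s M) := by
        have e := hstep (M-1)
        rw [show M - 1 + 1 = M from by omega, w0] at e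
        rw [w0]
        exact ((hFmid _ e).2.1).1
      have b2 : Qc m h ≤ F (s M) (s (M+1)) := by
        have e := hstep M
        rw [w0] at e
        rw [w0]
        exact ((hFmid _ (Ne.symm e)).2.1).2
      have b2' : 2 ≤ F (s (M+1)) (s (M+1+1)) := hFpos _ _ (hstep (M+1))
      rw [show M + 1 + 1 = M+2 from by omega] at b2'
      have b3 : Qc m h ≤ F (s (M + (segs j).length)) (s (M + (segs j).length + 1)) := by
        have e := hstep (M + (segs j).length)
        rw [wmid] at e
        rw [wmid]
        exact ((hFmid _ e).2.1).1
      have b4 : Qc m h ≤ F (s (M + (segs j).length + 1)) (s (M + (segs j).length + 2)) := by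
        have e := hstep (M + (segs j).length + 1)
        rw [wmid] at e
        rw [wmid]
        exact ((hFmid _ (Ne.symm e)).2.1).2
      have hdurRD := hRD v a b (by omega) ha hb hcons
      rw [hRDv] at hdurRD
      omega
    exact fun j => ⟨key j Vtx.top (by simp) rfl, key j Vtx.bot (by simp) rfl⟩
  -- ### counting special vertices
  have hchain : ∀ j : Fin p, List.Chain' (· ≠ ·) (segs j) := by
    intro j
    simp only [List.Chain']
    rw [List.isChain_iff_getElem]
    intro i hi
    have e1 := hblkt j i (by omega)
    have e2 := hblkt j (i+1) (by omega)
    have e3 := hstep (N + offW segs j + 1 + i)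
    rw [e1, show N + offW segs j + 1 + i + 1 = N + offW segs j + 1 + (i+1) from by omega,
      e2] at e3
    rw [
      ← List.getD_eq_getElem (segs j) Vtx.mid (by omega),
      ← List.getD_eq_getElem (segs j) Vtx.mid (by omega)]
    exact e3
  have hconsL : ∀ j : Fin p, ∃ x L, segs j = x :: L := by
    intro j
    cases hseg : segs j with
    | nil => exact absurd hseg (hne j)
    | cons a b => exact ⟨a, b, rfl⟩
  have hcountP : ∀ j : Fin p, (segs j).countP isSpecial = 2*m+1 := by
    intro j
    have hsub : SFin m h ⊆ ((segs j).filter isSpecial).toFinset := by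
      intro v hv
      rw [List.mem_toFinset, List.mem_filter]
      refine ⟨?_, (mem_SFin m h v).2 hv⟩
      have hv' := hv
      simp [SFin] at hv'
      rcases hv' with e | e | ⟨k, e⟩
      · rw [e]; exact (hTopBot j).1
      · rw [e]; exact (hTopBot j).2
      · rw [← e]; exact hSharedMem j k
    have hlow : 2*m+1 ≤ (segs j).countP isSpecial := by
      have h1 := Finset.card_le_card hsub
      rw [card_SFin m h hm] at h1
      calc 2*m+1 ≤ ((segs j).filter isSpecial).toFinset.card := h1
        _ ≤ ((segs j).filter isSpecial).length := List.toFinset_card_le _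
        _ = (segs j).countP isSpecial := List.countP_eq_length_filter.symm
    obtain ⟨x, L, hxL⟩ := hconsL j
    have hch := hchain j
    rw [hxL] at hch
    have hca := count_aux isSpecial F (Bc m h) hFsp hFsp2 L x hch
    have hbud := hbudget j
    rw [hxL] at hbud
    have hite : (if isSpecial x then Bc m h else 0) ≤ Bc m h := by split <;> omega
    have hup : (segs j).countP isSpecial ≤ 2*m+1 := by
      by_contra hccc
      push_neg at hccc
      rw [hxL] at hccc
      have e1 : 2 * Bc m h * (2*m+2) ≤ 2 * Bc m h * ((x :: L).countP isSpecial) :=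
        Nat.mul_le_mul_left _ (by omega)
      have e2 : 2 * Bc m h * (2*m+2) = (4*m+2) * Bc m h + 2 * Bc m h := by ring
      omega
    omega
  have hdurlow : ∀ j : Fin p, 4*m*Bc m h ≤ durL F (segs j) := by
    intro j
    obtain ⟨x, L, hxL⟩ := hconsL j
    have hch := hchain j
    rw [hxL] at hch
    have hca := count_aux isSpecial F (Bc m h) hFsp hFsp2 L x hch
    have hcp := hcountP j
    rw [hxL] at hcp
    rw [hxL]
    have hite : (if isSpecial x then Bc m h else 0) ≤ Bc m h := by split <;> omega
    have e2 : 2 * Bc m h * (2*m+1) = 4*m*Bc m h + 2 * Bc m h := by ring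
    rw [hcp] at hca
    omega
  have hcount1 : ∀ (j : Fin p) (v : Vtx m h), v ∈ SFin m h → (segs j).count v = 1 := by
    intro j v hv
    have hsum := countP_eq_sum_count isSpecial (SFin m h) (mem_SFin m h) (segs j)
    have hone : ∀ u ∈ SFin m h, 1 ≤ (segs j).count u := by
      intro u hu
      apply List.one_le_count_iff.mpr
      have hu' := hu
      simp [SFin] at hu'
      rcases hu' with e | e | ⟨k, e⟩
      · rw [e]; exact (hTopBot j).1
      · rw [e]; exact (hTopBot j).2
      · rw [← e]; exact hSharedMem j k
    by_contra hcc
    have hlt : ∑ _u ∈ SFin m h, 1 < ∑ u ∈ SFin m h, (segs j).count u :=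
      Finset.sum_lt_sum hone ⟨v, hv, by have := hone v hv; omega⟩
    rw [Finset.sum_const, smul_eq_mul, mul_one, card_SFin m h hm, ← hsum, hcountP j] at hlt
    omega
  -- ### each segment goes from one of top/bot to the other
  have hheadlast : ∀ j : Fin p,
      ((segs j).getD 0 Vtx.mid = Vtx.top ∧
        (segs j).getD ((segs j).length - 1) Vtx.mid = Vtx.bot) ∨
      ((segs j).getD 0 Vtx.mid = Vtx.bot ∧
        (segs j).getD ((segs j).length - 1) Vtx.mid = Vtx.top) := by
    intro j
    have hne2 : (segs j).getD 0 Vtx.mid ≠ (segs j).getD ((segs j).length - 1) Vtx.mid := by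
      intro hc
      obtain ⟨x, L, hxL⟩ := hconsL j
      have hLlen : 1 ≤ L.length := by
        have := hlen2 j
        rw [hxL] at this
        simp at this
        omega
      have hhd : (segs j).getD 0 Vtx.mid = x := by rw [hxL]; rfl
      have hlast_mem : (segs j).getD ((segs j).length - 1) Vtx.mid ∈ L := by
        rw [hxL]
        have hlen' : (x :: L).length - 1 = (L.length - 1) + 1 := by simp; omega
        rw [hlen', List.getD_cons_succ]
        rw [List.getD_eq_getElem L Vtx.mid (by omega)]
        exact List.getElem_mem _
      have hcnt := hcount1 j ((segs j).getD 0 Vtx.mid)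
        (by rcases hheadtb j with e | e <;> rw [e] <;> simp [SFin])
      rw [hhd] at hcnt hc
      rw [hxL, List.count_cons_self] at hcnt
      rw [← hc] at hlast_mem
      have := List.one_le_count_iff.mpr hlast_mem
      omega
    rcases hheadtb j with e1 | e1 <;> rcases hlasttb j with e2 | e2
    · exact absurd (e1.trans e2.symm) hne2
    · exact Or.inl ⟨e1, e2⟩
    · exact Or.inr ⟨e1, e2⟩
    · exact absurd (e1.trans e2.symm) hne2
  have honce_head : ∀ (j : Fin p) (v : Vtx m h), v ∈ SFin m h →
      (segs j).getD 0 Vtx.mid = v → ∀ t, 1 ≤ t → t < (segs j).length →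
        (segs j).getD t Vtx.mid ≠ v := by
    intro j v hv hhd t ht1 ht2
    obtain ⟨x, L, hxL⟩ := hconsL j
    rw [hxL] at hhd ht2 ⊢
    simp only [List.getD_cons_zero] at hhd
    have hcnt := hcount1 j v hv
    rw [hxL, ← hhd, List.count_cons_self] at hcnt
    have hnot : x ∉ L := List.count_eq_zero.mp (by omega)
    obtain ⟨t', rfl⟩ : ∃ t', t = t' + 1 := ⟨t-1, by omega⟩
    rw [List.getD_cons_succ]
    intro hc
    apply hnot
    have hmem : L.getD t' Vtx.mid ∈ L := by
      rw [List.getD_eq_getElem L Vtx.mid (by simp at ht2; omega)]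
      exact List.getElem_mem _
    rw [hhd, ← hc]
    exact hmem
  have honce_last : ∀ (j : Fin p) (v : Vtx m h), v ∈ SFin m h →
      (segs j).getD ((segs j).length - 1) Vtx.mid = v →
      ∀ t, t < (segs j).length - 1 → (segs j).getD t Vtx.mid ≠ v := by
    intro j v hv hlst t ht
    have hnil := hne j
    have hdec2 := List.dropLast_append_getLast hnil
    have hlast_eq : (segs j).getLast hnil = (segs j).getD ((segs j).length - 1) Vtx.mid := by
      rw [List.getLast_eq_getElem, List.getD_eq_getElem (segs j) _ (by have := hlen j; omega)]
    have hcnt := hcount1 j v hv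
    have hlenDL : (segs j).dropLast.length = (segs j).length - 1 := by simp
    have hcnt2 : ((segs j).dropLast).count v = 0 := by
      have e : (segs j).count v
          = ((segs j).dropLast).count v + ([(segs j).getLast hnil].count v) := by
        conv_lhs => rw [← hdec2]
        rw [List.count_append]
      have e2 : ([(segs j).getLast hnil].count v) = 1 := by
        rw [hlast_eq, hlst]
        simp
      omega
    have hmemDL : (segs j).getD t Vtx.mid ∈ (segs j).dropLast := by
      have e3 : (segs j).getD t Vtx.mid = ((segs j).dropLast).getD t Vtx.mid := by
        conv_lhs => rw [← hdec2]
        rw [List.getD_append _ _ _ _ (by omega)]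
      rw [e3, List.getD_eq_getElem _ _ (by omega)]
      exact List.getElem_mem _
    intro hc
    have := List.one_le_count_iff.mpr (hc ▸ hmemDL)
    omega
  -- ### consecutive segments have the same orientation
  have horient : ∀ j : Fin p,
      ((segs (nxtF hp j)).getD 0 Vtx.mid = Vtx.top ↔ (segs j).getD 0 Vtx.mid = Vtx.top) := by
    intro j
    have key : ∀ v v' : Vtx m h, v ∈ SFin m h → RD m h v = T m h →
        (v' = Vtx.top ∨ v' = Vtx.bot) → v ≠ Vtx.mid → v' ≠ Vtx.mid →
        (segs j).getD 0 Vtx.mid = v →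
        (segs j).getD ((segs j).length - 1) Vtx.mid = v' →
        (segs (nxtF hp j)).getD 0 Vtx.mid = v' →
        (segs (nxtF hp j)).getD ((segs (nxtF hp j)).length - 1) Vtx.mid = v →
        False := by
      intro v v' hvS hRDv hv'tb hvmid hv'mid hh1 hl1 hh2 hl2
      set M := N + offW segs j with hM
      set j' := nxtF hp j with hj'
      set M2 := N + offW segs j' with hM2
      have hlenj := hlen2 j
      have hlenj' := hlen2 j'
      have pa : s (M + 1) = v := by
        have e := hblkt j 0 (by omega)
        rw [← hM] at e
        simp only [Nat.add_zero] at e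
        rw [e, hh1]
      have pshift : ∀ k, s (M + (segs j).length + 2 + k) = s (M2 + 1 + k) := by
        intro k
        have e := hkey j (1 + k)
        rw [← hM, ← hj', ← hM2] at e
        rw [show M + 1 + (segs j).length + (1+k) = M + (segs j).length + 2 + k
            from by omega] at e
        rw [show M2 + (1+k) = M2 + 1 + k from by omega] at e
        exact e
      have pnext : ∀ t, t < (segs j').length →
          s (M + (segs j).length + 2 + t) = (segs j').getD t Vtx.mid := by
        intro t ht
        rw [pshift t]
        have e := hblkt j' t ht
        rw [← hM2] at e
        exact e
      have pb : s (M + (segs j).length + 2 + ((segs j').length - 1)) = v := by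
        rw [pnext _ (by omega), hl2]
      have w0' : s (M + (segs j).length + 1) = Vtx.mid := by
        have e := hblkmid j
        rw [← hM] at e
        rw [show M + 1 + (segs j).length = M + (segs j).length + 1 from by omega] at e
        exact e
      have hcons : ∀ i, M + 1 < i → i < M + (segs j).length + 2 + ((segs j').length - 1) →
          s i ≠ v := by
        intro i hi1 hi2
        by_cases c1 : i ≤ M + (segs j).length
        · have ht : i - (M+1) < (segs j).length := by omega
          have e := hblkt j _ ht
          rw [← hM] at e
          rw [show M + 1 + (i - (M+1)) = i from by omega] at e
          rw [e]
          exact honce_head j v hvS hh1 _ (by omega) ht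
        · by_cases c2 : i = M + (segs j).length + 1
          · rw [c2, w0']
            exact fun hc => hvmid hc.symm
          · have ht : i - (M + (segs j).length + 2) < (segs j').length - 1 := by omega
            have e := pnext (i - (M + (segs j).length + 2)) (by omega)
            rw [show M + (segs j).length + 2 + (i - (M + (segs j).length + 2)) = i
                from by omega] at e
            rw [e]
            exact honce_last j' v hvS hl2 _ ht
      have hdurRD := hRD v (M+1) (M + (segs j).length + 2 + ((segs j').length - 1))
        (by omega) pa pb hcons
      rw [hRDv] at hdurRD
      -- duration computation
      have q1 : dur F s (M+1) (M + (segs j).length + 2 + ((segs j').length - 1))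
          = dur F s (M+1) (M + (segs j).length)
          + dur F s (M + (segs j).length) (M + (segs j).length + 2 + ((segs j').length - 1)) :=
        dur_split F s (by omega) (by omega)
      have q2 : dur F s (M + (segs j).length) (M + (segs j).length + 2 + ((segs j').length - 1))
          = dur F s (M + (segs j).length) (M + (segs j).length + 1)
          + dur F s (M + (segs j).length + 1) (M + (segs j).length + 2 + ((segs j').length - 1)) :=
        dur_split F s (by omega) (by omega)
      have q3 : dur F s (M + (segs j).length + 1) (M + (segs j).length + 2 + ((segs j').length - 1))
          = dur F s (M + (segs j).length + 1) (M + (segs j).length + 2)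
          + dur F s (M + (segs j).length + 2) (M + (segs j).length + 2 + ((segs j').length - 1)) :=
        dur_split F s (by omega) (by omega)
      have q4 : dur F s (M + (segs j).length + 2) (M + (segs j).length + 2 + ((segs j').length - 1))
          = dur F s (M2 + 1) (M2 + 1 + ((segs j').length - 1)) :=
        dur_shift F s pshift ((segs j').length - 1)
      have q5 : dur F s (M2 + 1) (M2 + 1 + ((segs j').length - 1)) = durL F (segs j') := by
        rw [show M2 + 1 + ((segs j').length - 1) = M2 + (segs j').length from by omega]
        have e := hdurL j'
        rw [← hM2] at e
        exact e
      have q6 : dur F s (M+1) (M + (segs j).length) = durL F (segs j) := by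
        have e := hdurL j
        rw [← hM] at e
        exact e
      have v3 : dur F s (M + (segs j).length) (M + (segs j).length + 1)
          = F (s (M + (segs j).length)) (s (M + (segs j).length + 1)) := dur_one F s _
      have v4 : dur F s (M + (segs j).length + 1) (M + (segs j).length + 2)
          = F (s (M + (segs j).length + 1)) (s (M + (segs j).length + 2)) := dur_one F s _
      have wlast : s (M + (segs j).length) = v' := by
        have e := hblkt j ((segs j).length - 1) (by omega)
        rw [← hM] at e
        rw [show M + 1 + ((segs j).length - 1) = M + (segs j).length from by omega] at e
        rw [e, hl1]
      have whead2 : s (M + (segs j).length + 2) = v' := by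
        have e := pnext 0 (by omega)
        simp only [Nat.add_zero] at e
        rw [e, hh2]
      obtain ⟨q7, q8⟩ := ((hFmid v' hv'mid).2.2.1) hv'tb
      rw [wlast, w0'] at v3
      rw [w0', whead2] at v4
      rw [q8] at v3
      rw [q7] at v4
      have d1 := hdurlow j
      have d2 := hdurlow j'
      omega
    constructor
    · intro hnt
      by_contra hcj
      have hjb : (segs j).getD 0 Vtx.mid = Vtx.bot := by
        rcases hheadtb j with e | e
        · exact absurd e hcj
        · exact e
      have hl1 : (segs j).getD ((segs j).length - 1) Vtx.mid = Vtx.top := by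
        rcases hheadlast j with ⟨f1, _⟩ | ⟨_, f2⟩
        · rw [f1] at hjb; simp at hjb
        · exact f2
      have hl2 : (segs (nxtF hp j)).getD ((segs (nxtF hp j)).length - 1) Vtx.mid = Vtx.bot := by
        rcases hheadlast (nxtF hp j) with ⟨_, f2⟩ | ⟨f1, _⟩
        · exact f2
        · rw [f1] at hnt; simp at hnt
      exact key Vtx.bot Vtx.top (by simp [SFin]) rfl (Or.inl rfl) (by simp) (by simp)
        hjb hl1 hnt hl2
    · intro hjt
      by_contra hnt
      have hjb : (segs (nxtF hp j)).getD 0 Vtx.mid = Vtx.bot := by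
        rcases hheadtb (nxtF hp j) with e | e
        · exact absurd e hnt
        · exact e
      have hl1 : (segs j).getD ((segs j).length - 1) Vtx.mid = Vtx.bot := by
        rcases hheadlast j with ⟨_, f2⟩ | ⟨f1, _⟩
        · exact f2
        · rw [f1] at hjt; simp at hjt
      have hl2 : (segs (nxtF hp j)).getD ((segs (nxtF hp j)).length - 1) Vtx.mid = Vtx.top := by
        rcases hheadlast (nxtF hp j) with ⟨f1, _⟩ | ⟨_, f2⟩
        · rw [f1] at hjb; simp at hjb
        · exact f2
      exact key Vtx.top Vtx.bot (by simp [SFin]) rfl (Or.inr rfl) (by simp) (by simp)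
        hjt hl1 hjb hl2
  -- ### propagate the orientation around the cycle
  have hconst : ∀ (k : ℕ) (hk : k < p),
      (segs ⟨k, hk⟩).getD 0 Vtx.mid = (segs ⟨0, hp⟩).getD 0 Vtx.mid := by
    intro k
    induction k with
    | zero => intro hk; rfl
    | succ k ih =>
      intro hk
      have hk' : k < p := by omega
      have hnxt : nxtF hp ⟨k, hk'⟩ = ⟨k+1, hk⟩ := by
        simp [nxtF, hk]
      have hio := horient ⟨k, hk'⟩
      rw [hnxt] at hio
      have ihk := ih hk'
      rcases hheadtb ⟨0, hp⟩ with e0 | e0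
      · have h1 : (segs (⟨k+1, hk⟩ : Fin p)).getD 0 Vtx.mid = Vtx.top :=
          hio.mpr (by rw [ihk, e0])
        rw [h1, e0]
      · rcases hheadtb ⟨k+1, hk⟩ with f | f
        · have h1 := hio.mp f
          rw [ihk, e0] at h1
          simp at h1
        · rw [f, e0]
  -- ### conclusion
  have hfinal : ∀ (j : Fin p) (v v' : Vtx m h),
      (segs j).getD 0 Vtx.mid = v →
      (segs j).getD ((segs j).length - 1) Vtx.mid = v' →
      (segs j).head? = some v ∧ (segs j).getLast? = some v' := by
    intro j v v' f1 f2
    obtain ⟨x, L, hxL⟩ := hconsL j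
    constructor
    · rw [hxL] at f1 ⊢
      simp only [List.getD_cons_zero] at f1
      rw [List.head?_cons, f1]
    · have hnil := hne j
      rw [List.getLast?_eq_getLast hnil]
      have e : (segs j).getLast hnil = v' := by
        rw [List.getLast_eq_getElem,
          ← List.getD_eq_getElem (segs j) Vtx.mid (by have := hlen j; omega)]
        exact f2
      rw [e]
  rcases hheadtb ⟨0, hp⟩ with e0 | e0
  · left
    intro j
    have hj := hconst j.val j.isLt
    simp only [Fin.eta] at hj
    rw [e0] at hj
    rcases hheadlast j with ⟨f1, f2⟩ | ⟨f1, f2⟩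
    · exact hfinal j _ _ f1 f2
    · rw [hj] at f1; simp at f1
  · right
    intro j
    have hj := hconst j.val j.isLt
    simp only [Fin.eta] at hj
    rw [e0] at hj
    rcases hheadlast j with ⟨f1, f2⟩ | ⟨f1, f2⟩
    · rw [hj] at f1; simp at f1
    · exact hfinal j _ _ f1 f2

end CRUAV
end

section
/- Every segment s_j contains more than one vertex. -/
namespace CRUAV

lemma FT_mid_left_ge (m h : ℕ) (occurs : Fin h → Fin (2 * m) → Option Bool)
    (x : Vtx m h) (hx : x ≠ .mid) : T m h / 4 ≤ FT m h occurs Vtx.mid x := by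
  have h1 : T m h / 4 ≤ T m h := Nat.div_le_self _ _
  unfold FT
  cases x <;> simp_all [adjFT] <;> omega

lemma FT_mid_right_ge (m h : ℕ) (occurs : Fin h → Fin (2 * m) → Option Bool)
    (x : Vtx m h) (hx : x ≠ .mid) : T m h / 4 ≤ FT m h occurs x Vtx.mid := by
  have h1 : T m h / 4 ≤ T m h := Nat.div_le_self _ _
  unfold FT
  cases x <;> simp_all [adjFT] <;> omega

lemma flatten_head {V' : Type*} (d : V') (LL : List (List V'))
    (hLL : ∀ M ∈ LL, ∃ C, M = d :: C) :
    LL.flatten = [] ∨ ∃ C, LL.flatten = d :: C := by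
  induction LL with
  | nil => exact Or.inl rfl
  | cons M LL ih =>
    obtain ⟨C, rfl⟩ := hLL M (by simp)
    exact Or.inr ⟨C ++ LL.flatten, by simp⟩

/-- Every segment contains more than one vertex. -/
theorem segment_length_gt_one (m h : ℕ) (hm : 2 < m) (hh : 0 < h)
    (occurs : Fin h → Fin (2 * m) → Option Bool)
    (p : ℕ) (hp : 0 < p) (segs : Fin p → List (Vtx m h))
    (hne : ∀ j, segs j ≠ [])
    (hmid : ∀ j, Vtx.mid ∉ segs j)
    (hsol : IsSolution (RD m h) (FT m h occurs) (pathOf segs)) :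
    ∀ j, 1 < (segs j).length := by
  intro j
  by_contra hlen
  push_neg at hlen
  have hpos : 0 < (segs j).length := List.length_pos_iff.mpr (hne j)
  obtain ⟨v, hv⟩ := List.length_eq_one_iff.mp (show (segs j).length = 1 by omega)
  have hvmid : v ≠ Vtx.mid := by
    intro hvm
    exact hmid j (by rw [hv, hvm]; exact List.mem_singleton_self _)
  -- decompose the word around segment j
  have hmem : (Vtx.mid :: segs j) ∈ List.ofFn (fun t => Vtx.mid :: segs t) := by
    rw [List.mem_ofFn]; exact ⟨j, rfl⟩
  obtain ⟨L1, L2, hLL⟩ := List.append_of_mem hmem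
  set A := L1.flatten with hA
  set B := L2.flatten with hB
  have hword : word segs = A ++ Vtx.mid :: v :: B := by
    rw [word, hLL, hv, List.flatten_append]
    simp
    rfl
  set a := A.length with ha
  set W := (word segs).length with hWdef
  have hWlen : W = a + 2 + B.length := by
    rw [hWdef, hword]; simp; omega
  -- getD facts
  have hga : (word segs).getD a Vtx.mid = Vtx.mid := by
    rw [hword, List.getD_append_right A _ _ a le_rfl]
    simp [ha]
  have hga1 : (word segs).getD (a + 1) Vtx.mid = v := by
    rw [hword, List.getD_append_right A _ _ (a + 1) (by omega)]
    simp [ha]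
  have hga2 : B ≠ [] → (word segs).getD (a + 2) Vtx.mid = Vtx.mid := by
    intro hBne
    have : ∀ M ∈ L2, ∃ C, M = Vtx.mid :: C := by
      intro M hM
      have : M ∈ List.ofFn (fun t => Vtx.mid :: segs t) := by
        rw [hLL]; exact List.mem_append_right _ (List.mem_cons_of_mem _ hM)
      rw [List.mem_ofFn] at this
      obtain ⟨t, ht⟩ := this
      exact ⟨segs t, ht.symm⟩
    rcases flatten_head Vtx.mid L2 this with hB0 | ⟨C, hC⟩
    · exact absurd hB0 hBne
    · rw [hword, List.getD_append_right A _ _ (a + 2) (by omega),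
        show a + 2 - A.length = 2 by omega]
      rw [← hB] at hC
      rw [hC]
      simp
  have hg0 : (word segs).getD 0 Vtx.mid = Vtx.mid := by
    have hall : ∀ M ∈ List.ofFn (fun t => Vtx.mid :: segs t), ∃ C, M = Vtx.mid :: C := by
      intro M hM
      rw [List.mem_ofFn] at hM
      obtain ⟨t, ht⟩ := hM
      exact ⟨segs t, ht.symm⟩
    rcases flatten_head Vtx.mid _ hall with h0 | ⟨C, hC⟩
    · rw [word] at hword; rw [h0] at hword; simp at hword
    · rw [word] at hword ⊢
      rw [hC]; rfl
  -- generic path evaluation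
  have hsdef : ∀ n, pathOf segs n = (word segs).getD (n % W) Vtx.mid := fun n => rfl
  -- the vertex u
  have hm0 : 0 < m := by omega
  set i0 : Fin m := ⟨0, hm0⟩ with hi0
  set u : Vtx m h :=
    if v = Vtx.pvt i0 false then Vtx.pvt i0 true else Vtx.pvt i0 false with hu
  have huv : u ≠ v := by
    rw [hu]; split
    · rename_i hc; rw [hc]; simp
    · rename_i hc; exact fun hcc => hc hcc.symm
  have humid : u ≠ Vtx.mid := by rw [hu]; split <;> simp
  -- position n₀ of the singleton segment
  obtain ⟨q₁, -, hq₁⟩ := hsol.2.1 u 0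
  set n₀ := a + (q₁ + 1) * W with hn₀
  have hWpos : 2 ≤ W := by omega
  have hq₁n₀ : q₁ < n₀ := by
    have : q₁ + 1 ≤ (q₁ + 1) * W := Nat.le_mul_of_pos_right _ (by omega)
    omega
  have hs0 : pathOf segs n₀ = Vtx.mid := by
    rw [hsdef, hn₀, Nat.add_mul_mod_self_right, Nat.mod_eq_of_lt (by omega)]
    exact hga
  have hs1 : pathOf segs (n₀ + 1) = v := by
    have : n₀ + 1 = (a + 1) + (q₁ + 1) * W := by omega
    rw [hsdef, this, Nat.add_mul_mod_self_right, Nat.mod_eq_of_lt (by omega)]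
    exact hga1
  have hs2 : pathOf segs (n₀ + 2) = Vtx.mid := by
    have h2 : n₀ + 2 = (a + 2) + (q₁ + 1) * W := by omega
    by_cases hBe : B = []
    · have hW2 : W = a + 2 := by rw [hWlen, hBe]; simp
      have : (n₀ + 2) % W = 0 := by
        rw [h2, Nat.add_mul_mod_self_right, hW2]; simp
      rw [hsdef, this]; exact hg0
    · rw [hsdef, h2, Nat.add_mul_mod_self_right,
        Nat.mod_eq_of_lt (by have := List.length_pos_iff.mpr hBe; omega)]
      exact hga2 hBe
  -- the previous and next occurrences of u
  set q := Nat.findGreatest (fun t => pathOf segs t = u) n₀ with hq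
  have hqP : pathOf segs q = u := Nat.findGreatest_spec (P := fun t => pathOf segs t = u) (le_of_lt hq₁n₀) hq₁
  have hqle : q ≤ n₀ := Nat.findGreatest_le n₀
  have hqlt : q < n₀ := by
    rcases lt_or_eq_of_le hqle with hc | hc
    · exact hc
    · exfalso; rw [hc, hs0] at hqP; exact humid hqP.symm
  set S : Set ℕ := {t | n₀ + 3 ≤ t ∧ pathOf segs t = u} with hS
  have hSne : S.Nonempty := by
    obtain ⟨q₂, hq₂ge, hq₂⟩ := hsol.2.1 u (n₀ + 3)
    exact ⟨q₂, hq₂ge, hq₂⟩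
  set q' := sInf S with hq'def
  have hq'mem : q' ∈ S := Nat.sInf_mem hSne
  have hcons : ∀ i, q < i → i < q' → pathOf segs i ≠ u := by
    intro i hqi hiq' hsi
    by_cases hi : i ≤ n₀
    · exact Nat.findGreatest_is_greatest hqi hi hsi
    · by_cases hi3 : i < n₀ + 3
      · have : i = n₀ + 1 ∨ i = n₀ + 2 := by omega
        rcases this with rfl | rfl
        · rw [hs1] at hsi; exact huv hsi.symm
        · rw [hs2] at hsi; exact humid hsi.symm
      · exact Nat.notMem_of_lt_sInf hiq' ⟨by omega, hsi⟩
  have hdl : dur (FT m h occurs) (pathOf segs) q q' ≤ RD m h u :=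
    hsol.2.2 u q q' (by have := hq'mem.1; omega) hqP hq'mem.2 hcons
  -- lower bound on the duration
  obtain ⟨b, hb⟩ : ∃ b, n₀ = b + 1 := ⟨n₀ - 1, by omega⟩
  have hsub : Finset.Ico b (b + 4) ⊆ Finset.Ico q q' := by
    intro t ht
    simp only [Finset.mem_Ico] at *
    have := hq'mem.1
    omega
  have hexp : ∑ i ∈ Finset.Ico b (b + 4), FT m h occurs (pathOf segs i) (pathOf segs (i + 1))
      = FT m h occurs (pathOf segs b) (pathOf segs (b + 1))
      + FT m h occurs (pathOf segs (b + 1)) (pathOf segs (b + 2))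
      + FT m h occurs (pathOf segs (b + 2)) (pathOf segs (b + 3))
      + FT m h occurs (pathOf segs (b + 3)) (pathOf segs (b + 4)) := by
    rw [Finset.sum_Ico_eq_sum_range]
    norm_num [Finset.sum_range_succ]
  have e1 : pathOf segs (b + 1) = Vtx.mid := by rw [← hb]; exact hs0
  have e2 : pathOf segs (b + 2) = v := by rw [show b + 2 = n₀ + 1 by omega]; exact hs1
  have e3 : pathOf segs (b + 3) = Vtx.mid := by rw [show b + 3 = n₀ + 2 by omega]; exact hs2
  have t1 : T m h / 4 ≤ FT m h occurs (pathOf segs b) (pathOf segs (b + 1)) := by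
    rw [e1]
    exact FT_mid_right_ge m h occurs _ (by
      have := hsol.1 b; rw [e1] at this; exact this)
  have t2 : T m h / 4 ≤ FT m h occurs (pathOf segs (b + 1)) (pathOf segs (b + 2)) := by
    rw [e1, e2]; exact FT_mid_left_ge m h occurs v hvmid
  have t3 : T m h / 4 ≤ FT m h occurs (pathOf segs (b + 2)) (pathOf segs (b + 3)) := by
    rw [e2, e3]; exact FT_mid_right_ge m h occurs v hvmid
  have t4 : T m h / 4 ≤ FT m h occurs (pathOf segs (b + 3)) (pathOf segs (b + 4)) := by
    rw [e3]
    exact FT_mid_left_ge m h occurs _ (by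
      have := hsol.1 (b + 3); rw [e3] at this; exact (Ne.symm this))
  have hlow : 4 * (T m h / 4) ≤ dur (FT m h occurs) (pathOf segs) q q' := by
    have h5 : ∑ i ∈ Finset.Ico b (b + 4), FT m h occurs (pathOf segs i) (pathOf segs (i + 1))
        ≤ ∑ i ∈ Finset.Ico q q', FT m h occurs (pathOf segs i) (pathOf segs (i + 1)) :=
      Finset.sum_le_sum_of_subset hsub
    rw [hexp] at h5
    unfold dur
    omega
  -- numeric contradiction
  set M1 := m * (2 * (3 * m + 1) * l h + l h) with hM1
  set M2 := m * (2 * (3 * m + 2) * l h + l h) with hM2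
  have hT : T m h = 2 * (M1 + M2 + l h + 2 * h) := by rw [hM1, hM2]; rfl
  have hT4 : T m h = 4 * (m * ((3 * m + 1) * 2 * (12 * h + 17) + (12 * h + 17))
      + m * ((3 * m + 2) * 2 * (12 * h + 17) + (12 * h + 17)) + (12 * h + 17) + h) := by
    unfold T l; ring
  have hRDu : RD m h u = T m h / 2 + M2 + 4 * h - l h := by
    rw [hM2, hu]
    split <;> simp [RD, hi0]
  have hl : l h = 24 * h + 34 := rfl
  rw [hRDu] at hdl
  omega

end CRUAV
end
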